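/- The canonical model of S3VML–II is a three-valued Kripke model–II: let S be the set of all maximal consistent sets of S3VML–II, Δ R Θ iff for all □B ∈ Δ we have B ∈ Θ, and V(Δ,p) = T if p ∈ Δ, F if ¬p ∈ Δ, and U otherwise. Then for every Δ ∈ S and letter p with V(Δ,p)=U, every Θ ∈ S with Θ R Δ satisfies V(Θ,p)=U. -/
import Mathlib


/-- The three truth values of three-valued logic. -/
inductive TV : Type
  | T : TV
  | U : TV
  | F : TV
deriving DecidableEq

open TV

/-- Weak Kleene negation. -/
def negTV : TV → TV
  | T => F
  | U => U
  | F => T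

/-- Weak Kleene conjunction (`U` is infectious, otherwise classical). -/
def andTV : TV → TV → TV
  | U, _ => U
  | _, U => U
  | T, T => T
  | _, _ => F

/-- Weak Kleene disjunction (`U` is infectious, otherwise classical). -/
def orTV : TV → TV → TV
  | U, _ => U
  | _, U => U
  | F, F => F
  | _, _ => T

/-- Formulas of the modal language 3VML. -/
inductive Form (P : Type) : Type
  | atom : P → Form P
  | neg : Form P → Form P
  | conj : Form P → Form P → Form P
  | disj : Form P → Form P → Form P
  | box : Form P → Form P

/-- The natural deduction proof system S3VML–II.  `DerII Γ A` means `Γ ⊢_II A`. -/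
inductive DerII {P : Type} : Set (Form P) → Form P → Prop
  | mem {Γ : Set (Form P)} {A : Form P} : A ∈ Γ → DerII Γ A
  | weaken {Γ Δ : Set (Form P)} {A : Form P} : Γ ⊆ Δ → DerII Γ A → DerII Δ A
  | efq {Γ : Set (Form P)} {A B : Form P} :
      DerII Γ A → DerII Γ (.neg A) → DerII Γ B
  | nnI {Γ : Set (Form P)} {A : Form P} : DerII Γ A → DerII Γ (.neg (.neg A))
  | nnE {Γ : Set (Form P)} {A : Form P} : DerII Γ (.neg (.neg A)) → DerII Γ A
  | orI1 {Γ : Set (Form P)} {A B : Form P} :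
      DerII Γ (.conj (.neg A) B) → DerII Γ (.disj A B)
  | orI2 {Γ : Set (Form P)} {A B : Form P} :
      DerII Γ (.conj A (.neg B)) → DerII Γ (.disj A B)
  | orI3 {Γ : Set (Form P)} {A B : Form P} :
      DerII Γ (.conj A B) → DerII Γ (.disj A B)
  | orE {Γ : Set (Form P)} {A B C : Form P} :
      DerII Γ (.disj A B) →
      DerII (insert (.conj A B) Γ) C →
      DerII (insert (.conj A (.neg B)) Γ) C →
      DerII (insert (.conj (.neg A) B) Γ) C →
      DerII Γ C
  | andI {Γ : Set (Form P)} {A B : Form P} :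
      DerII Γ A → DerII Γ B → DerII Γ (.conj A B)
  | andE1 {Γ : Set (Form P)} {A B : Form P} : DerII Γ (.conj A B) → DerII Γ A
  | andE2 {Γ : Set (Form P)} {A B : Form P} : DerII Γ (.conj A B) → DerII Γ B
  | boxI1 {Γ : Set (Form P)} {A : Form P} :
      DerII Γ A →
      DerII (insert (.disj A (.neg A)) (Form.box '' Γ)) (.box A)
  | boxI2 {Γ : Set (Form P)} {A : Form P} :
      DerII Γ (.disj A (.neg A)) → DerII Γ (.box (.disj A (.neg A)))
  | nOrI {Γ : Set (Form P)} {A B : Form P} :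
      DerII Γ (.conj (.neg A) (.neg B)) → DerII Γ (.neg (.disj A B))
  | nOrE {Γ : Set (Form P)} {A B : Form P} :
      DerII Γ (.neg (.disj A B)) → DerII Γ (.conj (.neg A) (.neg B))
  | nAndI {Γ : Set (Form P)} {A B : Form P} :
      DerII Γ (.disj (.neg A) (.neg B)) → DerII Γ (.neg (.conj A B))
  | nAndE {Γ : Set (Form P)} {A B : Form P} :
      DerII Γ (.neg (.conj A B)) → DerII Γ (.disj (.neg A) (.neg B))
  | nBoxI {Γ : Set (Form P)} {A : Form P} :
      DerII Γ (.disj A (.neg A)) →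
      DerII Γ (.disj (.box A) (.neg (.box A)))
  | nBoxE {Γ : Set (Form P)} {A : Form P} :
      DerII Γ (.disj (.box A) (.neg (.box A))) →
      DerII Γ (.disj A (.neg A))

/-- A set of formulas is consistent in S3VML–II iff not every formula is derivable from it. -/
def ConsistentII {P : Type} (Γ : Set (Form P)) : Prop := ¬ ∀ A : Form P, DerII Γ A

/-- Maximal consistent sets for S3VML–II. -/
def MCSII {P : Type} (Γ : Set (Form P)) : Prop :=
  ConsistentII Γ ∧ (∀ A : Form P, DerII Γ A → A ∈ Γ) ∧
    ∀ A B : Form P, Form.disj A B ∈ Γ →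
      (Form.conj A B ∈ Γ ∨ Form.conj A (.neg B) ∈ Γ ∨ Form.conj (.neg A) B ∈ Γ)

/-- A three-valued Kripke model: worlds, an accessibility relation and a
three-valued valuation.  (Pointed models always have a world, so allowing an
empty carrier does not change the semantic consequence relation.) -/
structure KModel (P : Type) where
  S : Type
  R : S → S → Prop
  V : S → P → TV

open Classical in
/-- The canonical model for S3VML–II: worlds are the maximal consistent sets,
`Δ R Θ` iff `B ∈ Θ` whenever `□B ∈ Δ`, and `V(Δ,p)` is `T` if `p ∈ Δ`,
`F` if `¬p ∈ Δ`, and `U` otherwise. -/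
noncomputable def canModelII (P : Type) : KModel P where
  S := {Δ : Set (Form P) // MCSII Δ}
  R := fun Δ Θ => ∀ B : Form P, Form.box B ∈ Δ.1 → B ∈ Θ.1
  V := fun Δ p =>
    if Form.atom p ∈ Δ.1 then TV.T
    else if Form.neg (Form.atom p) ∈ Δ.1 then TV.F
    else TV.U

/-- The canonical model of S3VML–II is a three-valued Kripke model–II:
if `V(Δ,p) = U` then `V(Θ,p) = U` for every maximal consistent set `Θ`
with `Θ R Δ`. -/
theorem canonical_model_II_is_model_II (P : Type) [Countable P] [Nonempty P] :
    ∀ (Δ : (canModelII P).S) (p : P), (canModelII P).V Δ p = TV.U →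
      ∀ Θ : (canModelII P).S, (canModelII P).R Θ Δ → (canModelII P).V Θ p = TV.U := by
  intro Δ p hU Θ hR
  simp only [canModelII] at hU hR ⊢
  split_ifs at hU with h1 h2
  -- now p ∉ Δ, ¬p ∉ Δ
  have hΔcl := Δ.2.2.1
  have hΔdisj := Δ.2.2.2
  have hΘcl := Θ.2.2.1
  -- key: if Θ ⊢ p ∨ ¬p then contradiction
  have key : ¬ DerII Θ.1 (Form.disj (Form.atom p) (Form.neg (Form.atom p))) := by
    intro hd
    have hbox : Form.box (Form.disj (Form.atom p) (Form.neg (Form.atom p))) ∈ Θ.1 :=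
      hΘcl _ (DerII.boxI2 hd)
    have hmem : Form.disj (Form.atom p) (Form.neg (Form.atom p)) ∈ Δ.1 := hR _ hbox
    rcases hΔdisj _ _ hmem with h | h | h
    · exact h1 (hΔcl _ (DerII.andE1 (DerII.mem h)))
    · exact h1 (hΔcl _ (DerII.andE1 (DerII.mem h)))
    · exact h2 (hΔcl _ (DerII.andE2 (DerII.mem h)))
  split_ifs with g1 g2
  · exact absurd (key (DerII.orI2 (DerII.andI (DerII.mem g1)
      (DerII.nnI (DerII.mem g1))))) (fun h => h)
  · exact absurd (key (DerII.orI1 (DerII.andI (DerII.mem g2) (DerII.mem g2))))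
      (fun h => h)
  · rfl
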